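/- Let q \ge 3, or q = 2 and d \ne e (with d \le e). For each 1 \le j \le d, the value B_j(d-j+1) is the smallest among B_j(0), B_j(1), ..., B_j(d), i.e., it is the smallest eigenvalue of the distance-j bilinear forms graph H_q(d,e,j). -/

import Mathlib

/-- The Gaussian binomial coefficient `[m choose l]_q = ∏_{t=1}^{l} (q^{m-t+1}-1)/(q^t-1)`. -/
def gaussBinom (q : ℚ) (m l : ℕ) : ℚ :=
  ∏ t ∈ Finset.range l, (q ^ (m - t) - 1) / (q ^ (t + 1) - 1)

/-- The `h`-th term of the eigenvalue expression for the bilinear forms graph `H_q(d,e,j)`: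
`T_h(i,j) = (-1)^{j-h} q^{eh + C(j-h,2)} [d-h, d-j]_q [d-i, h]_q`. -/
def bilinT (q : ℚ) (d e j i h : ℕ) : ℚ :=
  (-1 : ℚ) ^ (j - h) * q ^ (e * h + (j - h).choose 2) *
    gaussBinom q (d - h) (d - j) * gaussBinom q (d - i) h

/-- The eigenvalue `B_j(i)` of the bilinear forms graph `H_q(d,e,j)`. -/
def bilinB (q : ℚ) (d e j i : ℕ) : ℚ :=
  ∑ h ∈ Finset.range (min j (d - i) + 1), bilinT q d e j i h

/-
Let `T_h = bilinMag … h` be the absolute value of the `h`-th term, so that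
`B_j(i) = (-1)^(j-m) Σ_{h ≤ m} (-1)^(m-h) T_h` with `m = min j (d-i)`. Every estimate needs only
`2 q^d ≤ (q-1) q^e`, which is where `q ≥ 3` or `d < e` enters. It makes `T_h` increasing in `h`,
so the alternating sum lies in `[0, T_m]`, and `B_j(i) ≥ 0` unless `j - m` is odd, i.e.
`i = d-j+1, d-j+3, …`. At `i₀ = d-j+1` a sharper ratio bound gives
`B_j(i₀) ≤ T_{j-2} - T_{j-1} ≤ -T_{j-1}/4`, while for `i ≥ i₀ + 2` we have
`B_j(i) ≥ -T_{d-i}(i)`, and these top terms at least halve at each step in `i`.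
-/

open Finset

lemma pow_mul_sub_one_le_pow_succ_sub_one {q : ℚ} (hq : 1 ≤ q) (n : ℕ) :
    q ^ n * (q - 1) ≤ q ^ (n + 1) - 1 := by
  rw [pow_succ]
  nlinarith [one_le_pow₀ (n := n) hq]

section GaussBinom

variable {q : ℚ}

lemma gaussBinom_succ_right (q : ℚ) (m l : ℕ) :
    gaussBinom q m (l + 1) = gaussBinom q m l * ((q ^ (m - l) - 1) / (q ^ (l + 1) - 1)) :=
  prod_range_succ _ _

lemma gaussBinom_succ_left (q : ℚ) (m l : ℕ) :
    gaussBinom q (m + 1) l * (q ^ (m + 1 - l) - 1) = gaussBinom q m l * (q ^ (m + 1) - 1) := by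
  induction l with
  | zero => simp [gaussBinom]
  | succ l ih =>
    rw [gaussBinom_succ_right, gaussBinom_succ_right, Nat.add_sub_add_right]
    calc _ = gaussBinom q (m + 1) l * (q ^ (m + 1 - l) - 1) *
          ((q ^ (m - l) - 1) / (q ^ (l + 1) - 1)) := by ring
      _ = _ := by rw [ih]; ring

lemma gaussBinom_pos (hq : 1 < q) {m l : ℕ} (h : l ≤ m) : 0 < gaussBinom q m l :=
  prod_pos fun t ht => div_pos (sub_pos.2 (one_lt_pow₀ hq (by grind)))
    (sub_pos.2 (one_lt_pow₀ hq t.succ_ne_zero))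

lemma gaussBinom_self (hq : 1 < q) (m : ℕ) : gaussBinom q m m = 1 := by
  induction m with
  | zero => simp [gaussBinom]
  | succ m ih =>
    have h := gaussBinom_succ_left q m m
    rw [ih, one_mul, Nat.add_sub_cancel_left, pow_one] at h
    rw [gaussBinom_succ_right, Nat.add_sub_cancel_left, pow_one, mul_div_assoc', h,
      div_self (sub_pos.2 (one_lt_pow₀ hq m.succ_ne_zero)).ne']

end GaussBinom

def bilinMag (q : ℚ) (d e j i h : ℕ) : ℚ :=
  q ^ (e * h + (j - h).choose 2) * gaussBinom q (d - h) (d - j) * gaussBinom q (d - i) h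

section BilinMag

variable {q : ℚ} {d e j i h : ℕ}

lemma bilinT_eq_neg_one_pow_mul_bilinMag (q : ℚ) (d e j i h : ℕ) :
    bilinT q d e j i h = (-1) ^ (j - h) * bilinMag q d e j i h := by
  unfold bilinT bilinMag
  ring

lemma bilinMag_pos (hq : 1 < q) (hhj : h ≤ j) (hhi : h ≤ d - i) : 0 < bilinMag q d e j i h := by
  have := gaussBinom_pos hq (m := d - h) (l := d - j) (by omega)
  have := gaussBinom_pos hq hhi
  unfold bilinMag
  positivity

lemma bilinMag_succ_mul (hq : 1 < q) (hj : j ≤ d) (hhj : h + 1 ≤ j) :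
    bilinMag q d e j i (h + 1) * ((q ^ (d - h) - 1) * (q ^ (h + 1) - 1) * q ^ (j - h)) =
      bilinMag q d e j i h * ((q ^ (j - h) - 1) * (q ^ (d - i - h) - 1) * q ^ (e + 1)) := by
  have hleft : gaussBinom q (d - (h + 1)) (d - j) * (q ^ (d - h) - 1) =
      gaussBinom q (d - h) (d - j) * (q ^ (j - h) - 1) := by
    have h0 := gaussBinom_succ_left q (d - (h + 1)) (d - j)
    rwa [show d - (h + 1) + 1 - (d - j) = j - h by omega,
      show d - (h + 1) + 1 = d - h by omega, eq_comm] at h0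
  have hright : gaussBinom q (d - i) (h + 1) * (q ^ (h + 1) - 1) =
      gaussBinom q (d - i) h * (q ^ (d - i - h) - 1) := by
    rw [gaussBinom_succ_right, mul_assoc,
      div_mul_cancel₀ _ (sub_pos.2 (one_lt_pow₀ hq h.succ_ne_zero)).ne']
  have hpow : q ^ (e * (h + 1) + (j - (h + 1)).choose 2) * q ^ (j - h) =
      q ^ (e * h + (j - h).choose 2) * q ^ (e + 1) := by
    rw [← pow_add, ← pow_add, show j - h = j - (h + 1) + 1 by omega, Nat.choose_succ_succ',
      Nat.choose_one_right]
    ring_nf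
  unfold bilinMag
  calc _ = q ^ (e * (h + 1) + (j - (h + 1)).choose 2) * q ^ (j - h) *
        (gaussBinom q (d - (h + 1)) (d - j) * (q ^ (d - h) - 1)) *
        (gaussBinom q (d - i) (h + 1) * (q ^ (h + 1) - 1)) := by ring
    _ = _ := by rw [hpow, hleft, hright]; ring

end BilinMag

section Inequalities

variable {q : ℚ} {d e j i h : ℕ}

lemma pow_succ_le_sq_mul_pow (hq : 2 ≤ q) (hqe : 2 * q ^ d ≤ (q - 1) * q ^ e) :
    q ^ (d + 1) ≤ (q - 1) ^ 2 * q ^ e := by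
  rw [pow_succ]
  nlinarith [pow_pos (by linarith : (0 : ℚ) < q) d]

lemma sub_one_mul_sub_one_mul_pow_le (hq : 2 ≤ q) (hqe : 2 * q ^ d ≤ (q - 1) * q ^ e)
    {a b x y : ℕ} (ha : 1 ≤ a) (hb : 1 ≤ b) (hxy : x + y = d + 1) :
    (q ^ x - 1) * (q ^ y - 1) * q ^ a ≤ (q ^ a - 1) * (q ^ b - 1) * q ^ (e + 1) := by
  have hq1 : 1 ≤ q := by linarith
  have hx := one_le_pow₀ (n := x) hq1
  have hy := one_le_pow₀ (n := y) hq1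
  have hxy' : (q ^ x - 1) * (q ^ y - 1) ≤ q ^ (d + 1) := by
    rw [← hxy, pow_add]
    nlinarith
  have ha' := pow_mul_sub_one_le_pow_succ_sub_one hq1 (a - 1)
  have hb' : q - 1 ≤ q ^ b - 1 := by linarith [le_self_pow₀ hq1 (by omega : b ≠ 0)]
  have hpa : 0 ≤ q ^ (a - 1) * (q - 1) := by
    have := pow_pos (by linarith : (0 : ℚ) < q) (a - 1)
    nlinarith
  rw [Nat.sub_add_cancel ha] at ha'
  calc _ ≤ q ^ (d + 1) * q ^ a := by gcongr
    _ ≤ (q - 1) ^ 2 * q ^ e * q ^ a := by gcongr; exact pow_succ_le_sq_mul_pow hq hqe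
    _ = q ^ (a - 1) * (q - 1) * (q - 1) * q ^ (e + 1) := by
      rw [← Nat.sub_add_cancel ha]; simp only [Nat.add_sub_cancel]; ring
    _ ≤ _ := by gcongr; linarith

lemma bilinMag_le_succ (hq : 2 ≤ q) (hqe : 2 * q ^ d ≤ (q - 1) * q ^ e) (hj : j ≤ d)
    (hhj : h + 1 ≤ j) (hhi : h + 1 ≤ d - i) :
    bilinMag q d e j i h ≤ bilinMag q d e j i (h + 1) := by
  have hq1 : 1 < q := by linarith
  have hP : 0 < (q ^ (d - h) - 1) * (q ^ (h + 1) - 1) * q ^ (j - h) := by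
    have := sub_pos.2 (one_lt_pow₀ hq1 (by omega : d - h ≠ 0))
    have := sub_pos.2 (one_lt_pow₀ hq1 h.succ_ne_zero)
    positivity
  refine le_of_mul_le_mul_right ?_ hP
  rw [bilinMag_succ_mul hq1 hj hhj]
  exact mul_le_mul_of_nonneg_left
    (sub_one_mul_sub_one_mul_pow_le hq hqe (by omega) (by omega) (by omega))
    (bilinMag_pos hq1 (by omega) (by omega)).le

end Inequalities

section TopTerm

variable {q : ℚ} {d e j i : ℕ}

lemma bilinMag_self_sub (hq : 1 < q) (hi : i ≤ d) :
    bilinMag q d e j i (d - i) =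
      q ^ (e * (d - i) + (i + j - d).choose 2) * gaussBinom q i (d - j) := by
  unfold bilinMag
  rw [Nat.sub_sub_self hi, gaussBinom_self hq, mul_one, show j - (d - i) = i + j - d by omega]

lemma two_mul_bilinMag_succ_self_sub_le (hq : 2 ≤ q) (hqe : 2 * q ^ d ≤ (q - 1) * q ^ e)
    (hj : j ≤ d) (hi : d - j + 1 ≤ i) (hid : i + 1 ≤ d) :
    2 * bilinMag q d e j (i + 1) (d - (i + 1)) ≤ bilinMag q d e j i (d - i) := by
  have hq0 : 0 < q := by linarith
  have hq1 : 1 < q := by linarith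
  set k := i + j - d with hk
  rw [bilinMag_self_sub hq1 hid, bilinMag_self_sub hq1 (by omega),
    show i + 1 + j - d = k + 1 by omega]
  have hgauss : gaussBinom q (i + 1) (d - j) * (q ^ (k + 1) - 1) =
      gaussBinom q i (d - j) * (q ^ (i + 1) - 1) := by
    rw [← show i + 1 - (d - j) = k + 1 by omega]
    exact gaussBinom_succ_left q i (d - j)
  have hpow : q ^ (e * (d - (i + 1)) + (k + 1).choose 2) * q ^ e =
      q ^ (e * (d - i) + k.choose 2) * q ^ k := by
    rw [← pow_add, ← pow_add, Nat.choose_succ_succ', Nat.choose_one_right,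
      show d - i = d - (i + 1) + 1 by omega]
    ring_nf
  have hratio : 2 * (q ^ k * (q ^ (i + 1) - 1)) ≤ q ^ e * (q ^ (k + 1) - 1) := by
    have hi' : q ^ (i + 1) ≤ q ^ d := pow_le_pow_right₀ hq1.le hid
    have := pow_mul_sub_one_le_pow_succ_sub_one hq1.le k
    have := pow_pos hq0 k
    have := pow_pos hq0 e
    nlinarith
  have hG := gaussBinom_pos hq1 (m := i) (l := d - j) (by omega)
  have hden : 0 < (q ^ (k + 1) - 1) * q ^ e :=
    mul_pos (sub_pos.2 (one_lt_pow₀ hq1 k.succ_ne_zero)) (pow_pos hq0 e)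
  refine le_of_mul_le_mul_right ?_ hden
  calc _ = 2 * (q ^ (e * (d - (i + 1)) + (k + 1).choose 2) * q ^ e) *
        (gaussBinom q (i + 1) (d - j) * (q ^ (k + 1) - 1)) := by ring
    _ = q ^ (e * (d - i) + k.choose 2) * gaussBinom q i (d - j) *
        (2 * (q ^ k * (q ^ (i + 1) - 1))) := by rw [hpow, hgauss]; ring
    _ ≤ q ^ (e * (d - i) + k.choose 2) * gaussBinom q i (d - j) *
        (q ^ e * (q ^ (k + 1) - 1)) := by gcongr
    _ = _ := by ring

lemma four_mul_bilinMag_self_sub_le (hq : 2 ≤ q) (hqe : 2 * q ^ d ≤ (q - 1) * q ^ e)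
    (hj : j ≤ d) (hi : d - j + 3 ≤ i) (hid : i ≤ d) :
    4 * bilinMag q d e j i (d - i) ≤ bilinMag q d e j (d - j + 1) (j - 1) := by
  induction i, hi using Nat.le_induction with
  | base =>
    have h1 := two_mul_bilinMag_succ_self_sub_le hq hqe hj (i := d - j + 1) le_rfl (by omega)
    have h2 := two_mul_bilinMag_succ_self_sub_le hq hqe hj (i := d - j + 2) (by omega) hid
    rw [show d - (d - j + 1) = j - 1 by omega] at h1
    linarith
  | succ i hi ih =>
    have h := two_mul_bilinMag_succ_self_sub_le hq hqe hj (i := i) (by omega) hid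
    have := bilinMag_pos (q := q) (d := d) (e := e) (by linarith)
      (by omega : d - (i + 1) ≤ j) le_rfl
    linarith [ih (by omega)]

lemma four_mul_bilinMag_le_three_mul (hq : 2 ≤ q) (hqe : 2 * q ^ d ≤ (q - 1) * q ^ e)
    (hj2 : 2 ≤ j) (hj : j ≤ d) :
    4 * bilinMag q d e j (d - j + 1) (j - 2) ≤ 3 * bilinMag q d e j (d - j + 1) (j - 1) := by
  have hq0 : 0 < q := by linarith
  have hq1 : 1 < q := by linarith
  have hrec := bilinMag_succ_mul (e := e) (i := d - j + 1) (h := j - 2) hq1 hj (by omega)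
  rw [show j - 2 + 1 = j - 1 by omega, show d - (j - 2) = d - j + 2 by omega,
    show j - (j - 2) = 2 by omega, show d - (d - j + 1) - (j - 2) = 1 by omega, pow_one] at hrec
  have hA := one_le_pow₀ (n := d - j + 2) hq1.le
  have hB := one_le_pow₀ (n := j - 1) hq1.le
  have hratio : 4 * ((q ^ (d - j + 2) - 1) * (q ^ (j - 1) - 1) * q ^ 2) ≤
      3 * ((q ^ 2 - 1) * (q - 1) * q ^ (e + 1)) := by
    have hprod : (q ^ (d - j + 2) - 1) * (q ^ (j - 1) - 1) * q ^ 2 ≤ q ^ 3 * q ^ d := by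
      calc _ ≤ q ^ (d - j + 2) * q ^ (j - 1) * q ^ 2 := by gcongr <;> nlinarith
        _ = q ^ 3 * q ^ d := by rw [← pow_add, ← pow_add, ← pow_add]; congr 1; omega
    have hq2 : 2 * q ^ 2 ≤ 3 * (q ^ 2 - 1) := by nlinarith
    have hqe' : 0 ≤ (q - 1) * q ^ e := mul_nonneg (by linarith) (pow_pos hq0 e).le
    calc _ ≤ 2 * q ^ 2 * q * (2 * q ^ d) := by linarith [pow_succ q 2]
      _ ≤ 2 * q ^ 2 * q * ((q - 1) * q ^ e) := by gcongr
      _ ≤ 3 * (q ^ 2 - 1) * q * ((q - 1) * q ^ e) := by gcongr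
      _ = _ := by ring
  have hN : 0 < (q ^ 2 - 1) * (q - 1) * q ^ (e + 1) := by
    have := sub_pos.2 (one_lt_pow₀ hq1 two_ne_zero)
    have := sub_pos.2 hq1
    positivity
  have hpos := bilinMag_pos (d := d) (e := e) (i := d - j + 1) hq1
    (by omega : j - 1 ≤ j) (by omega)
  refine le_of_mul_le_mul_right ?_ hN
  calc _ = 4 * (bilinMag q d e j (d - j + 1) (j - 2) * ((q ^ 2 - 1) * (q - 1) * q ^ (e + 1))) := by
        ring
    _ = bilinMag q d e j (d - j + 1) (j - 1) *
        (4 * ((q ^ (d - j + 2) - 1) * (q ^ (j - 1) - 1) * q ^ 2)) := by rw [← hrec]; ring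
    _ ≤ bilinMag q d e j (d - j + 1) (j - 1) * (3 * ((q ^ 2 - 1) * (q - 1) * q ^ (e + 1))) := by
        gcongr
    _ = _ := by ring

end TopTerm

def altSum (u : ℕ → ℚ) (m : ℕ) : ℚ :=
  ∑ h ∈ range (m + 1), (-1) ^ (m - h) * u h

lemma altSum_succ (u : ℕ → ℚ) (m : ℕ) : altSum u (m + 1) = u (m + 1) - altSum u m := by
  unfold altSum
  rw [sum_range_succ, Nat.sub_self, pow_zero, one_mul, sub_eq_add_neg, add_comm,
    ← sum_neg_distrib]
  congr 1
  refine sum_congr rfl fun h hh => ?_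
  rw [show m + 1 - h = m - h + 1 by grind, pow_succ]
  ring

lemma altSum_nonneg_and_le {u : ℕ → ℚ} {m : ℕ} (hu : 0 ≤ u 0)
    (hmono : ∀ h < m, u h ≤ u (h + 1)) : 0 ≤ altSum u m ∧ altSum u m ≤ u m := by
  induction m with
  | zero => simp [altSum, hu]
  | succ m ih =>
    obtain ⟨h0, hle⟩ := ih fun h hh => hmono h (by omega)
    have := hmono m (by omega)
    rw [altSum_succ]
    constructor <;> linarith

section BilinB

variable {q : ℚ} {d e j i : ℕ}

lemma bilinB_eq_altSum (q : ℚ) (d e j i : ℕ) :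
    bilinB q d e j i =
      (-1) ^ (j - min j (d - i)) * altSum (bilinMag q d e j i) (min j (d - i)) := by
  unfold bilinB altSum
  rw [mul_sum]
  refine sum_congr rfl fun h hh => ?_
  rw [bilinT_eq_neg_one_pow_mul_bilinMag, ← mul_assoc, ← pow_add]
  congr 2
  grind

lemma altSum_bilinMag_nonneg_and_le (hq : 2 ≤ q) (hqe : 2 * q ^ d ≤ (q - 1) * q ^ e)
    (hj : j ≤ d) {m : ℕ} (hmj : m ≤ j) (hmi : m ≤ d - i) :
    0 ≤ altSum (bilinMag q d e j i) m ∧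
      altSum (bilinMag q d e j i) m ≤ bilinMag q d e j i m :=
  altSum_nonneg_and_le (bilinMag_pos (by linarith) (Nat.zero_le _) (Nat.zero_le _)).le
    fun _ hh => bilinMag_le_succ hq hqe hj (by omega) (by omega)

lemma bilinB_nonneg_of_even (hq : 2 ≤ q) (hqe : 2 * q ^ d ≤ (q - 1) * q ^ e) (hj : j ≤ d)
    (heven : Even (j - min j (d - i))) : 0 ≤ bilinB q d e j i := by
  rw [bilinB_eq_altSum, heven.neg_one_pow, one_mul]
  exact (altSum_bilinMag_nonneg_and_le hq hqe hj (min_le_left _ _) (min_le_right _ _)).1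

lemma neg_bilinMag_le_bilinB (hq : 2 ≤ q) (hqe : 2 * q ^ d ≤ (q - 1) * q ^ e) (hj : j ≤ d) :
    -bilinMag q d e j i (min j (d - i)) ≤ bilinB q d e j i := by
  obtain ⟨h0, hle⟩ :=
    altSum_bilinMag_nonneg_and_le hq hqe hj (min_le_left j (d - i)) (min_le_right _ _)
  rw [bilinB_eq_altSum]
  rcases neg_one_pow_eq_or ℚ (j - min j (d - i)) with h | h <;> rw [h] <;> linarith

lemma bilinB_sub_add_one_eq_neg_altSum (hj1 : 1 ≤ j) (hj : j ≤ d) :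
    bilinB q d e j (d - j + 1) = -altSum (bilinMag q d e j (d - j + 1)) (j - 1) := by
  rw [bilinB_eq_altSum, show min j (d - (d - j + 1)) = j - 1 by omega,
    show j - (j - 1) = 1 by omega, pow_one, neg_one_mul]

lemma bilinB_sub_add_one_nonpos (hq : 2 ≤ q) (hqe : 2 * q ^ d ≤ (q - 1) * q ^ e) (hj1 : 1 ≤ j)
    (hj : j ≤ d) : bilinB q d e j (d - j + 1) ≤ 0 := by
  have h := (altSum_bilinMag_nonneg_and_le (i := d - j + 1) hq hqe hj (m := j - 1)
    (by omega) (by omega)).1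
  rw [bilinB_sub_add_one_eq_neg_altSum hj1 hj]
  linarith

lemma four_mul_bilinB_sub_add_one_le (hq : 2 ≤ q) (hqe : 2 * q ^ d ≤ (q - 1) * q ^ e) (hj2 : 2 ≤ j)
    (hj : j ≤ d) :
    4 * bilinB q d e j (d - j + 1) ≤ -bilinMag q d e j (d - j + 1) (j - 1) := by
  have hprev := (altSum_bilinMag_nonneg_and_le (i := d - j + 1) hq hqe hj (m := j - 2)
    (by omega) (by omega)).2
  have hsucc := altSum_succ (bilinMag q d e j (d - j + 1)) (j - 2)
  rw [show j - 2 + 1 = j - 1 by omega] at hsucc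
  rw [bilinB_sub_add_one_eq_neg_altSum (by omega) hj, hsucc]
  linarith [four_mul_bilinMag_le_three_mul hq hqe hj2 hj]

end BilinB

lemma two_mul_pow_le_sub_one_mul_pow {q d e : ℕ} (hde : d ≤ e)
    (hq : 3 ≤ q ∨ (q = 2 ∧ d ≠ e)) :
    2 * (q : ℚ) ^ d ≤ (q - 1) * q ^ e := by
  rcases hq with hq3 | ⟨rfl, hne⟩
  · have hq3' : (3 : ℚ) ≤ q := by exact_mod_cast hq3
    calc 2 * (q : ℚ) ^ d ≤ (q - 1) * q ^ d := by gcongr; linarith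
      _ ≤ (q - 1) * q ^ e := by gcongr <;> linarith
  · calc 2 * ((2 : ℕ) : ℚ) ^ d = 2 ^ (d + 1) := by push_cast; ring
      _ ≤ 2 ^ e := pow_le_pow_right₀ (by norm_num) (by omega)
      _ = ((2 : ℕ) - 1 : ℚ) * (2 : ℕ) ^ e := by norm_num

theorem bilinB_smallest (q d e j : ℕ) (hde : d ≤ e)
    (hq : 3 ≤ q ∨ (q = 2 ∧ d ≠ e)) (hj1 : 1 ≤ j) (hj2 : j ≤ d) :
    ∀ i ≤ d, bilinB (q : ℚ) d e j (d - j + 1) ≤ bilinB (q : ℚ) d e j i := by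
  intro i hi
  have hq2 : (2 : ℚ) ≤ q := by exact_mod_cast (show 2 ≤ q by omega)
  have hqe := two_mul_pow_le_sub_one_mul_pow hde hq
  rcases Nat.even_or_odd (j - min j (d - i)) with heven | hodd
  · exact (bilinB_sub_add_one_nonpos hq2 hqe hj1 hj2).trans (bilinB_nonneg_of_even hq2 hqe hj2 heven)
  · obtain rfl | hi3 : i = d - j + 1 ∨ d - j + 3 ≤ i := by
      have := Nat.odd_iff.1 hodd
      omega
    · exact le_rfl
    calc bilinB q d e j (d - j + 1) ≤ -bilinMag q d e j (d - j + 1) (j - 1) / 4 := by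
          linarith [four_mul_bilinB_sub_add_one_le hq2 hqe (by omega) hj2]
      _ ≤ -bilinMag q d e j i (d - i) := by
          linarith [four_mul_bilinMag_self_sub_le hq2 hqe hj2 hi3 hi]
      _ ≤ bilinB q d e j i := by
          have h := neg_bilinMag_le_bilinB (i := i) hq2 hqe hj2
          rwa [show min j (d - i) = d - i by omega] at h
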